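/- Let L be a finite set of n links with nonnegative reals g_{vw} (g_{vv} > 0) and β ≥ 1. Suppose there exist reals x_v ∈ [0,1] and y_{vw} ≥ 0 with y_{vw} ≥ x_v + x_w − 1, satisfying x_v g_{vv} ≥ β Σ_{w ≠ v} y_{vw} g_{vw} for all v, and Σ_v x_v ≥ (1+ε) n/2 for some ε > 0. Define δ_v = max(x_v − 1/2, 0) and L⁺ = {v : δ_v > 0}. Then if R ⊆ L⁺ is a random subset including each v ∈ L⁺ independently with probability δ_v/2, the expected number of links v ∈ R with g_{vv} ≥ β Σ_{w ∈ R \ {v}} g_{vw} is at least ε·n/8. -/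

import Mathlib

/-! For `v ∈ L⁺` the load `β ∑_{w ∈ R \ {v}} g_{vw}` is independent of the event `v ∈ R`.
Since `v ∈ L⁺` forces `x_v > 1/2`, every `w` has `δ_w/2 ≤ (x_v + x_w - 1)/2 ≤ y_{vw}/2`, so the
SDP constraint of `v` bounds the expected load by `x_v g_{vv}/2 ≤ g_{vv}/2`. By Markov the load
is at most `g_{vv}` with probability at least `1/2`, hence `v` is sampled and feasible with
probability at least `δ_v/4`; finally `∑_v δ_v ≥ ∑_v (x_v - 1/2) ≥ εn/2`. -/

open MeasureTheory ProbabilityTheory Finset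

lemma mul_sum_mul_sub_half_le {ι : Type*} {s t : Finset ι} (hst : s ⊆ t) {a y x : ι → ℝ}
    {β x₀ b : ℝ} (hβ : 0 ≤ β) (ha : ∀ j ∈ t, 0 ≤ a j) (hy0 : ∀ j ∈ t, 0 ≤ y j)
    (hy1 : ∀ j ∈ t, x₀ + x j - 1 ≤ y j) (hx₀ : 1 / 2 ≤ x₀)
    (hrow : β * ∑ j ∈ t, y j * a j ≤ b) :
    β * ∑ j ∈ s, a j * (x j - 1 / 2) ≤ b := by
  refine le_trans (mul_le_mul_of_nonneg_left ?_ hβ) hrow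
  calc ∑ j ∈ s, a j * (x j - 1 / 2)
      ≤ ∑ j ∈ s, y j * a j := sum_le_sum fun j hj => by
        rw [mul_comm (y j)]
        exact mul_le_mul_of_nonneg_left (by linarith [hy1 j (hst hj)]) (ha j (hst hj))
    _ ≤ ∑ j ∈ t, y j * a j :=
        sum_le_sum_of_subset_of_nonneg hst fun j hj _ => mul_nonneg (hy0 j hj) (ha j hj)

lemma sum_le_sum_filter_pos_max {ι : Type*} (s : Finset ι) (f : ι → ℝ) :
    ∑ i ∈ s, f i ≤ ∑ i ∈ s with 0 < max (f i) 0, max (f i) 0 := by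
  rw [sum_filter_of_ne fun i _ hi => lt_of_le_of_ne (le_max_right _ _) (Ne.symm hi)]
  exact sum_le_sum fun i _ => le_max_left _ _

section Probability

variable {Ω ι : Type*}

lemma ite_one_zero_of_zero_or_one {X : Ω → ℝ} (h01 : ∀ ω, X ω = 0 ∨ X ω = 1) (ω : Ω) :
    (if X ω = 1 then (1 : ℝ) else 0) = X ω := by
  rcases h01 ω with h | h <;> simp [h]

variable [MeasurableSpace Ω] {μ : Measure Ω}

lemma integral_ite_one_zero {p : Ω → Prop} [DecidablePred p] (hp : MeasurableSet {ω | p ω}) :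
    ∫ ω, (if p ω then (1 : ℝ) else 0) ∂μ = μ.real {ω | p ω} := by
  simpa [Set.indicator_apply] using integral_indicator_one (μ := μ) hp

lemma integrable_ite_one_zero [IsFiniteMeasure μ] {p : Ω → Prop} [DecidablePred p]
    (hp : MeasurableSet {ω | p ω}) : Integrable (fun ω => if p ω then (1 : ℝ) else 0) μ := by
  have hindicator : (fun ω => if p ω then (1 : ℝ) else 0) = {ω | p ω}.indicator 1 := by
    ext ω
    simp [Set.indicator_apply]
  rw [hindicator]
  exact (integrable_const 1).indicator hp

lemma integrable_of_zero_or_one [IsFiniteMeasure μ] {X : Ω → ℝ} (hX : Measurable X)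
    (h01 : ∀ ω, X ω = 0 ∨ X ω = 1) : Integrable X μ :=
  (integrable_ite_one_zero (measurableSet_eq_fun hX measurable_const)).congr
    (ae_of_all _ (ite_one_zero_of_zero_or_one h01))

lemma integral_eq_measureReal_of_zero_or_one {X : Ω → ℝ} (hX : Measurable X)
    (h01 : ∀ ω, X ω = 0 ∨ X ω = 1) : ∫ ω, X ω ∂μ = μ.real {ω | X ω = 1} := by
  rw [← integral_ite_one_zero (measurableSet_eq_fun hX measurable_const)]
  exact integral_congr_ae (ae_of_all _ fun ω => (ite_one_zero_of_zero_or_one h01 ω).symm)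

lemma one_sub_integral_div_le_measureReal_le [IsProbabilityMeasure μ] {S : Ω → ℝ}
    (hS0 : 0 ≤ᵐ[μ] S) (hS : Integrable S μ) {c : ℝ} (hc : 0 < c) :
    1 - (∫ ω, S ω ∂μ) / c ≤ μ.real {ω | S ω ≤ c} := by
  have hcover : 1 ≤ μ.real {ω | S ω ≤ c} + μ.real {ω | c ≤ S ω} :=
    calc 1 = μ.real Set.univ := probReal_univ.symm
      _ ≤ μ.real ({ω | S ω ≤ c} ∪ {ω | c ≤ S ω}) :=
        measureReal_mono fun ω _ => le_total (S ω) c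
      _ ≤ _ := measureReal_union_le _ _
  have hmarkov : μ.real {ω | c ≤ S ω} ≤ (∫ ω, S ω ∂μ) / c := by
    rw [le_div_iff₀ hc, mul_comm]
    exact mul_meas_ge_le_integral_of_nonneg hS0 hS c
  linarith

lemma ProbabilityTheory.iIndepFun.indepFun_sum_mul_of_notMem {X : ι → Ω → ℝ}
    (hind : iIndepFun X μ) (hX : ∀ i, Measurable (X i)) {s : Finset ι} {i : ι} (hi : i ∉ s)
    (a : ι → ℝ) :
    IndepFun (fun ω => ∑ j ∈ s, a j * X j ω) (X i) μ := by
  classical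
  -- rescale every variable but `X i`, which keeps coefficient `1`
  have hscaled := (hind.comp (fun j t => Function.update a i 1 j * t) fun j => by fun_prop)
    |>.indepFun_finsetSum_of_notMem (fun j => by fun_prop) hi
  convert hscaled using 1
  · funext ω
    simp only [Finset.sum_apply, Function.comp_apply]
    exact sum_congr rfl fun j hj => by rw [Function.update_of_ne (ne_of_mem_of_not_mem hj hi)]
  · funext ω
    simp

theorem measureReal_mul_one_sub_le_measureReal_and_sum_le [IsProbabilityMeasure μ]
    {X : ι → Ω → ℝ} (hind : iIndepFun X μ) (hX : ∀ i, Measurable (X i)) {s : Finset ι}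
    (h01 : ∀ j ∈ s, ∀ ω, X j ω = 0 ∨ X j ω = 1) {i : ι} (hi : i ∉ s) {a : ι → ℝ}
    (ha : ∀ j ∈ s, 0 ≤ a j) {c : ℝ} (hc : 0 < c) :
    μ.real {ω | X i ω = 1} * (1 - (∑ j ∈ s, a j * μ.real {ω | X j ω = 1}) / c) ≤
      μ.real {ω | X i ω = 1 ∧ ∑ j ∈ s, a j * X j ω ≤ c} := by
  have hS : Integrable (fun ω => ∑ j ∈ s, a j * X j ω) μ :=
    integrable_finsetSum _ fun j hj => (integrable_of_zero_or_one (hX j) (h01 j hj)).const_mul _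
  have hS_mean : ∫ ω, ∑ j ∈ s, a j * X j ω ∂μ = ∑ j ∈ s, a j * μ.real {ω | X j ω = 1} := by
    rw [integral_finsetSum _ fun j hj => (integrable_of_zero_or_one (hX j) (h01 j hj)).const_mul _]
    refine sum_congr rfl fun j hj => ?_
    rw [integral_const_mul, integral_eq_measureReal_of_zero_or_one (hX j) (h01 j hj)]
  have hS0 : 0 ≤ᵐ[μ] fun ω => ∑ j ∈ s, a j * X j ω :=
    ae_of_all _ fun ω => sum_nonneg fun j hj =>
      mul_nonneg (ha j hj) (by rcases h01 j hj ω with h | h <;> simp [h])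
  have hprod : μ.real {ω | X i ω = 1 ∧ ∑ j ∈ s, a j * X j ω ≤ c} =
      μ.real {ω | X i ω = 1} * μ.real {ω | ∑ j ∈ s, a j * X j ω ≤ c} := by
    simp only [measureReal_def, ← ENNReal.toReal_mul]
    congr 1
    exact (hind.indepFun_sum_mul_of_notMem hX hi a).symm.measure_inter_preimage_eq_mul _ _
      (measurableSet_singleton 1) measurableSet_Iic
  rw [hprod, ← hS_mean]
  gcongr
  exact one_sub_integral_div_le_measureReal_le hS0 hS hc

theorem half_measureReal_le_measureReal_and_sum_le [IsProbabilityMeasure μ]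
    {X : ι → Ω → ℝ} (hind : iIndepFun X μ) (hX : ∀ i, Measurable (X i)) {s : Finset ι}
    (h01 : ∀ j ∈ s, ∀ ω, X j ω = 0 ∨ X j ω = 1) {i : ι} (hi : i ∉ s) {a : ι → ℝ}
    (ha : ∀ j ∈ s, 0 ≤ a j) {c : ℝ} (hc : 0 < c)
    (hmean : ∑ j ∈ s, a j * μ.real {ω | X j ω = 1} ≤ c / 2) :
    μ.real {ω | X i ω = 1} / 2 ≤ μ.real {ω | X i ω = 1 ∧ ∑ j ∈ s, a j * X j ω ≤ c} := by
  refine le_trans ?_ (measureReal_mul_one_sub_le_measureReal_and_sum_le hind hX h01 hi ha hc)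
  have hfactor : 1 / 2 ≤ 1 - (∑ j ∈ s, a j * μ.real {ω | X j ω = 1}) / c := by
    rw [le_sub_comm, div_le_iff₀ hc]
    linarith
  rw [div_eq_mul_one_div]
  gcongr

theorem half_measureReal_le_measureReal_feasible_of_sdp_row [IsProbabilityMeasure μ]
    {X : ι → Ω → ℝ} (hind : iIndepFun X μ) (hX : ∀ i, Measurable (X i)) {s t : Finset ι}
    (hst : s ⊆ t)
    (h01 : ∀ j ∈ s, ∀ ω, X j ω = 0 ∨ X j ω = 1) {x : ι → ℝ}
    (hp : ∀ j ∈ s, μ.real {ω | X j ω = 1} = (x j - 1 / 2) / 2) {i : ι} (hi : i ∉ s)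
    {a y : ι → ℝ} {β b : ℝ} (hβ : 0 ≤ β) (ha : ∀ j ∈ t, 0 ≤ a j) (hy0 : ∀ j ∈ t, 0 ≤ y j)
    (hy1 : ∀ j ∈ t, x i + x j - 1 ≤ y j) (hxi : 1 / 2 ≤ x i)
    (hrow : β * ∑ j ∈ t, y j * a j ≤ b) (hb : 0 < b) :
    μ.real {ω | X i ω = 1} / 2 ≤ μ.real {ω | X i ω = 1 ∧ β * ∑ j ∈ s, a j * X j ω ≤ b} := by
  have hmean : ∑ j ∈ s, β * a j * μ.real {ω | X j ω = 1} ≤ b / 2 := by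
    have hload := mul_sum_mul_sub_half_le hst hβ ha hy0 hy1 hxi hrow
    calc _ = (β * ∑ j ∈ s, a j * (x j - 1 / 2)) / 2 := by
          rw [mul_sum, sum_div]
          exact sum_congr rfl fun j hj => by rw [hp j hj]; ring
      _ ≤ b / 2 := by linarith
  have hlight := half_measureReal_le_measureReal_and_sum_le hind hX h01 hi
    (fun j hj => mul_nonneg hβ (ha j (hst hj))) hb hmean
  simpa only [mul_assoc, ← mul_sum] using hlight

end Probability

theorem stmt8_general {Ω : Type*} [MeasureSpace Ω] [IsProbabilityMeasure (ℙ : Measure Ω)]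
    {ι : Type*} [DecidableEq ι] (L : Finset ι) (n : ℕ) (hn : L.card = n)
    (g : ι → ι → ℝ) (hg : ∀ v w, 0 ≤ g v w) (hgvv : ∀ v ∈ L, 0 < g v v)
    (β : ℝ) (hβ : 1 ≤ β)
    (x : ι → ℝ) (hx : ∀ v ∈ L, x v ∈ Set.Icc (0 : ℝ) 1)
    (y : ι → ι → ℝ) (hy0 : ∀ v w, 0 ≤ y v w)
    (hy1 : ∀ v ∈ L, ∀ w ∈ L, x v + x w - 1 ≤ y v w)
    (hsdp : ∀ v ∈ L, β * ∑ w ∈ L.erase v, y v w * g v w ≤ x v * g v v)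
    (ε : ℝ)
    (hval : (1 + ε) * n / 2 ≤ ∑ v ∈ L, x v)
    (δ : ι → ℝ) (hδ : ∀ v, δ v = max (x v - 1 / 2) 0)
    (Lp : Finset ι) (hLp : Lp = L.filter (fun v => 0 < δ v))
    (X : ι → Ω → ℝ) (hmeas : ∀ v, Measurable (X v))
    (hBer : ∀ v ∈ Lp, ∀ ω, X v ω = 0 ∨ X v ω = 1)
    (hind : iIndepFun X ℙ)
    (hp : ∀ v ∈ Lp, (ℙ {ω | X v ω = 1}).toReal = δ v / 2) :
    ε * n / 8 ≤
      ∫ ω, ∑ v ∈ Lp, (if X v ω = 1 ∧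
        β * ∑ w ∈ Lp.erase v, g v w * X w ω ≤ g v v then (1 : ℝ) else 0) := by
  have hLpL : Lp ⊆ L := hLp ▸ filter_subset _ _
  have hexcess : ∀ v ∈ Lp, 0 < x v - 1 / 2 := fun v hv => by
    rw [hLp, mem_filter, hδ] at hv
    exact (lt_max_iff.1 hv.2).resolve_right (lt_irrefl 0)
  have hδLp : ∀ v ∈ Lp, δ v = x v - 1 / 2 := fun v hv =>
    (hδ v).trans (max_eq_left (hexcess v hv).le)
  have hlink : ∀ v ∈ Lp, δ v / 4 ≤ (ℙ : Measure Ω).real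
      {ω | X v ω = 1 ∧ β * ∑ w ∈ Lp.erase v, g v w * X w ω ≤ g v v} := by
    intro v hv
    have hvL := hLpL hv
    have hfeasible := half_measureReal_le_measureReal_feasible_of_sdp_row hind hmeas
      (erase_subset_erase v hLpL) (fun w hw => hBer w (mem_of_mem_erase hw))
      (fun w hw => by
        rw [measureReal_def, hp w (mem_of_mem_erase hw), hδLp w (mem_of_mem_erase hw)])
      (notMem_erase v Lp) (by linarith) (fun w _ => hg v w) (fun w _ => hy0 v w)
      (fun w hw => hy1 v hvL w (mem_of_mem_erase hw)) (by linarith [hexcess v hv])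
      ((hsdp v hvL).trans (mul_le_of_le_one_left (hgvv v hvL).le (hx v hvL).2)) (hgvv v hvL)
    rw [measureReal_def, hp v hv] at hfeasible
    linarith
  have hδsum : ε * n / 2 ≤ ∑ v ∈ Lp, δ v :=
    calc ε * n / 2 ≤ ∑ v ∈ L, (x v - 1 / 2) := by
          rw [sum_sub_distrib, sum_const, hn, nsmul_eq_mul]
          linarith
      _ ≤ ∑ v ∈ Lp, δ v := by simpa only [hLp, hδ] using sum_le_sum_filter_pos_max L _
  have hevent : ∀ v, MeasurableSet
      {ω | X v ω = 1 ∧ β * ∑ w ∈ Lp.erase v, g v w * X w ω ≤ g v v} := fun v =>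
    (measurableSet_eq_fun (hmeas v) measurable_const).inter
      (measurableSet_le (f := fun ω => β * ∑ w ∈ Lp.erase v, g v w * X w ω) (by fun_prop)
        measurable_const)
  rw [integral_finsetSum _ fun v _ => integrable_ite_one_zero (hevent v)]
  calc ε * n / 8 ≤ ∑ v ∈ Lp, δ v / 4 := by
        rw [← sum_div]
        linarith
    _ ≤ _ := sum_le_sum fun v hv => (hlink v hv).trans_eq (integral_ite_one_zero (hevent v)).symm

/-- Main theorem (expectation bound). Given a fractional SDP solution
`x, y` of value at least `(1+ε)n/2`, sampling each `v ∈ L⁺ = {v : x_v > 1/2}`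
independently with probability `δ_v/2` (`δ_v = max(x_v - 1/2, 0)`) yields, in
expectation, at least `ε n / 8` sampled links that are feasible in the sample. -/
theorem stmt8 {Ω : Type*} [MeasureSpace Ω] [IsProbabilityMeasure (ℙ : Measure Ω)]
    {ι : Type*} [DecidableEq ι] (L : Finset ι) (n : ℕ) (hn : L.card = n)
    (g : ι → ι → ℝ) (hg : ∀ v w, 0 ≤ g v w) (hgvv : ∀ v ∈ L, 0 < g v v)
    (β : ℝ) (hβ : 1 ≤ β)
    (x : ι → ℝ) (hx : ∀ v ∈ L, x v ∈ Set.Icc (0 : ℝ) 1)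
    (y : ι → ι → ℝ) (hy0 : ∀ v w, 0 ≤ y v w)
    (hy1 : ∀ v ∈ L, ∀ w ∈ L, x v + x w - 1 ≤ y v w)
    (hsdp : ∀ v ∈ L, β * ∑ w ∈ L.erase v, y v w * g v w ≤ x v * g v v)
    (ε : ℝ) (hε : 0 < ε)
    (hval : (1 + ε) * n / 2 ≤ ∑ v ∈ L, x v)
    (δ : ι → ℝ) (hδ : ∀ v, δ v = max (x v - 1 / 2) 0)
    (Lp : Finset ι) (hLp : Lp = L.filter (fun v => 0 < δ v))
    (X : ι → Ω → ℝ) (hmeas : ∀ v, Measurable (X v))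
    (hBer : ∀ v ∈ Lp, ∀ ω, X v ω = 0 ∨ X v ω = 1)
    (hind : iIndepFun X ℙ)
    (hp : ∀ v ∈ Lp, (ℙ {ω | X v ω = 1}).toReal = δ v / 2) :
    ε * n / 8 ≤
      ∫ ω, ∑ v ∈ Lp, (if X v ω = 1 ∧
        β * ∑ w ∈ Lp.erase v, g v w * X w ω ≤ g v v then (1 : ℝ) else 0) :=
  stmt8_general L n hn g hg hgvv β hβ x hx y hy0 hy1 hsdp ε hval δ hδ Lp hLp X hmeas hBer hind hp
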